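/- arXiv:2401.00572 — 2 statements merged into one kernel-verified Lean document; each statement's English description precedes it below -/
import Mathlib

section
/- The poset K_κ is σ-closed: for every sequence ⟨p_n : n < ω⟩ of conditions in K_κ with p_{n+1} ≤ p_n for all n, there exists a condition q ∈ K_κ such that q ≤ p_n for all n < ω. -/
/-!
The lower bound of `p₀ ≥ p₁ ≥ ⋯` has height `α = sup αₙ`, which is countable because `ω₁` is
regular. Its tree is `⋃ tₙ` together with countably many new branches of length `α`, each the
union of a chain of top-level nodes of cofinally many `tₙ`: for every `γ` in some `dom bₙ` the
union of the coherent values `bₙ(γ)`, and for every node `s ∈ tₘ` the union of a chain obtained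
by extending `s` successively to the top levels of `tₘ, tₘ₊₁, …`. The second kind makes every
node of `⋃ tₙ` reach the new top level; the first kind carries `b`.
-/

noncomputable section

/-- The first uncountable ordinal. -/
def omega1 : Ordinal.{0} := (Cardinal.aleph 1).ord

/-- Restriction of (the graph of) a partial function on ordinals to arguments below `γ`. -/
def nodeRestrict (s : Set (Ordinal.{0} × Ordinal.{0})) (γ : Ordinal.{0}) :
    Set (Ordinal.{0} × Ordinal.{0}) :=
  {p ∈ s | p.1 < γ}

/-- `s` is (the graph of) a function with domain the ordinal `β` and values in `ω₁`. -/
def IsFuncOn (s : Set (Ordinal.{0} × Ordinal.{0})) (β : Ordinal.{0}) : Prop :=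
  (∀ p ∈ s, p.1 < β ∧ p.2 < omega1) ∧ ∀ γ < β, ∃! v : Ordinal.{0}, (γ, v) ∈ s

/-- A Jech condition: a pair `(t, b)` where `t` is a countable initial segment of an
`ω₁`-tree of sequences with a maximal level `α`, closed under restriction, with all
levels below `α` nonempty and every node extending to the top level; and `b` is a
function (given by its graph) from a countable subset of `κ` into the top level of `t`. -/
structure JechCond (κ : Cardinal.{0}) where
  α : Ordinal.{0}
  t : Set (Set (Ordinal.{0} × Ordinal.{0}))
  b : Set (Ordinal.{0} × Set (Ordinal.{0} × Ordinal.{0}))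
  hα : α < omega1
  ht_count : t.Countable
  ht_fun : ∀ s ∈ t, ∃ β ≤ α, IsFuncOn s β
  ht_closed : ∀ s ∈ t, ∀ γ : Ordinal.{0}, nodeRestrict s γ ∈ t
  ht_levels : ∀ β < α, ∃ s ∈ t, IsFuncOn s β
  ht_top_ext : ∀ s ∈ t, ∃ s' ∈ t, IsFuncOn s' α ∧ s ⊆ s'
  hb_fun : ∀ x ∈ b, ∀ y ∈ b, x.1 = y.1 → x = y
  hb_count : (Prod.fst '' b).Countable
  hb_dom : ∀ x ∈ b, x.1 < κ.ord
  hb_val : ∀ x ∈ b, x.2 ∈ t ∧ IsFuncOn x.2 α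

/-- The order on `K_κ`: `p ≤ q` iff `α_q ≤ α_p`, `t_q` is the part of `t_p` of levels
`≤ α_q`, `dom b_q ⊆ dom b_p` and `b_q(γ) = b_p(γ) ↾ α_q` for every `γ ∈ dom b_q`. -/
def JechLE {κ : Cardinal.{0}} (p q : JechCond κ) : Prop :=
  q.α ≤ p.α ∧
  q.t = {s ∈ p.t | ∃ β ≤ q.α, IsFuncOn s β} ∧
  ∀ x ∈ q.b, ∃ y ∈ p.b, x.1 = y.1 ∧ x.2 = nodeRestrict y.2 q.α

theorem nodeRestrict_subset (s : Set (Ordinal.{0} × Ordinal.{0})) (γ : Ordinal.{0}) :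
    nodeRestrict s γ ⊆ s :=
  fun _ h => h.1

theorem nodeRestrict_nodeRestrict (s : Set (Ordinal.{0} × Ordinal.{0})) (γ δ : Ordinal.{0}) :
    nodeRestrict (nodeRestrict s δ) γ = nodeRestrict s (min γ δ) := by
  ext x
  exact ⟨fun ⟨⟨hs, hδ⟩, hγ⟩ => ⟨hs, lt_min hγ hδ⟩,
    fun ⟨hs, hγδ⟩ => ⟨⟨hs, hγδ.trans_le (min_le_right _ _)⟩, hγδ.trans_le (min_le_left _ _)⟩⟩

namespace IsFuncOn

variable {s u w : Set (Ordinal.{0} × Ordinal.{0})} {β β' γ : Ordinal.{0}}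

theorem nodeRestrict_of_le (h : IsFuncOn s β) (hβγ : β ≤ γ) : nodeRestrict s γ = s :=
  Set.Subset.antisymm (nodeRestrict_subset s γ) fun x hx => ⟨hx, (h.1 x hx).1.trans_le hβγ⟩

theorem le_of_isFuncOn (h : IsFuncOn s β) (h' : IsFuncOn s β') : β ≤ β' :=
  not_lt.1 fun hlt => by
    obtain ⟨v, hv, -⟩ := h.2 β' hlt
    exact (h'.1 _ hv).1.false

theorem dom_unique (h : IsFuncOn s β) (h' : IsFuncOn s β') : β = β' :=
  le_antisymm (h.le_of_isFuncOn h') (h'.le_of_isFuncOn h)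

theorem eq_nodeRestrict_of_subset (hu : IsFuncOn u β) (hw : IsFuncOn w β') (huw : u ⊆ w) :
    u = nodeRestrict w β := by
  refine Set.Subset.antisymm (fun x hx => ⟨huw hx, (hu.1 x hx).1⟩) ?_
  rintro ⟨δ, v⟩ ⟨hv, hδ⟩
  obtain ⟨v', hv', -⟩ := hu.2 δ hδ
  rwa [(hw.2 δ (hw.1 _ hv).1).unique hv (huw hv')]

theorem nodeRestrict_eq_of_subset (hu : IsFuncOn u β) (hw : IsFuncOn w β') (huw : u ⊆ w)
    (hγ : γ ≤ β) : nodeRestrict u γ = nodeRestrict w γ := by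
  rw [hu.eq_nodeRestrict_of_subset hw huw, nodeRestrict_nodeRestrict, min_eq_left hγ]

end IsFuncOn

theorem isFuncOn_sUnion {F : Set (Set (Ordinal.{0} × Ordinal.{0}))} {γ : Ordinal.{0}}
    (hF : IsChain (· ⊆ ·) F) (hle : ∀ f ∈ F, ∃ β ≤ γ, IsFuncOn f β)
    (hcof : ∀ δ < γ, ∃ f ∈ F, ∃ β, δ < β ∧ IsFuncOn f β) : IsFuncOn (⋃₀ F) γ := by
  refine ⟨fun x ⟨f, hf, hx⟩ => ?_, fun δ hδ => ?_⟩
  · obtain ⟨β, hβ, hfβ⟩ := hle f hf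
    exact ⟨(hfβ.1 x hx).1.trans_le hβ, (hfβ.1 x hx).2⟩
  · obtain ⟨f, hf, β, hδβ, hfβ⟩ := hcof δ hδ
    obtain ⟨v, hv, -⟩ := hfβ.2 δ hδβ
    refine ⟨v, ⟨f, hf, hv⟩, fun v' ⟨g, hg, hv'⟩ => ?_⟩
    obtain ⟨β', -, hgβ'⟩ := hle g hg
    rcases hF.total hf hg with hfg | hgf
    · exact (hgβ'.2 δ (hgβ'.1 _ hv').1).unique hv' (hfg hv)
    · exact (hfβ.2 δ hδβ).unique (hgf hv') hv

namespace JechCond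

variable {κ : Cardinal.{0}}

instance : Preorder (JechCond κ) where
  le := JechLE
  le_refl r := by
    refine ⟨le_rfl, ?_, fun x hx => ⟨x, hx, rfl, ((r.hb_val x hx).2.nodeRestrict_of_le le_rfl).symm⟩⟩
    ext s
    exact ⟨fun h => ⟨h, r.ht_fun s h⟩, And.left⟩
  le_trans r q s hrq hqs := by
    obtain ⟨hα₁, ht₁, hb₁⟩ := hrq
    obtain ⟨hα₂, ht₂, hb₂⟩ := hqs
    refine ⟨hα₂.trans hα₁, ?_, fun x hx => ?_⟩
    · rw [ht₂, ht₁]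
      ext u
      simp only [Set.mem_sep_iff]
      exact ⟨fun ⟨⟨hu, _⟩, hβ⟩ => ⟨hu, hβ⟩,
        fun ⟨hu, β, hβ, hf⟩ => ⟨⟨hu, β, hβ.trans hα₂, hf⟩, β, hβ, hf⟩⟩
    · obtain ⟨y, hy, hxy, hxy'⟩ := hb₂ x hx
      obtain ⟨z, hz, hyz, hyz'⟩ := hb₁ y hy
      refine ⟨z, hz, hxy.trans hyz, ?_⟩
      rw [hxy', hyz', nodeRestrict_nodeRestrict, min_eq_left hα₂]

variable {q r : JechCond κ} {s : Set (Ordinal.{0} × Ordinal.{0})}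

theorem α_le_of_le (h : q ≤ r) : r.α ≤ q.α := h.1

theorem t_eq_of_le (h : q ≤ r) : r.t = {s ∈ q.t | ∃ β ≤ r.α, IsFuncOn s β} := h.2.1

theorem t_subset_of_le (h : q ≤ r) : r.t ⊆ q.t := by
  rw [t_eq_of_le h]
  exact Set.sep_subset _ _

theorem exists_mem_b_of_le (h : q ≤ r) {γ : Ordinal.{0}} {f : Set (Ordinal.{0} × Ordinal.{0})}
    (hf : (γ, f) ∈ r.b) : ∃ g, (γ, g) ∈ q.b := by
  obtain ⟨⟨γ', g⟩, hg, rfl, -⟩ := h.2.2 _ hf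
  exact ⟨g, hg⟩

theorem eq_nodeRestrict_of_le (h : q ≤ r) {γ : Ordinal.{0}}
    {f g : Set (Ordinal.{0} × Ordinal.{0})} (hf : (γ, f) ∈ r.b) (hg : (γ, g) ∈ q.b) :
    f = nodeRestrict g r.α := by
  obtain ⟨y, hy, hγ, hfy⟩ := h.2.2 _ hf
  rwa [q.hb_fun y hy _ hg hγ.symm] at hfy

def IsTop (r : JechCond κ) (s : Set (Ordinal.{0} × Ordinal.{0})) : Prop :=
  s ∈ r.t ∧ IsFuncOn s r.α

open Classical in
def topExt (r : JechCond κ) (s : Set (Ordinal.{0} × Ordinal.{0})) :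
    Set (Ordinal.{0} × Ordinal.{0}) :=
  if h : s ∈ r.t then (r.ht_top_ext s h).choose else s

theorem topExt_spec (hs : s ∈ r.t) : r.IsTop (r.topExt s) ∧ s ⊆ r.topExt s := by
  obtain ⟨hmem, hfun, hsub⟩ := (r.ht_top_ext s hs).choose_spec
  rw [topExt, dif_pos hs]
  exact ⟨⟨hmem, hfun⟩, hsub⟩

section Limit

variable {p : ℕ → JechCond κ}

def limHeight (p : ℕ → JechCond κ) : Ordinal.{0} := ⨆ n, (p n).α

theorem le_limHeight (p : ℕ → JechCond κ) (n : ℕ) : (p n).α ≤ limHeight p :=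
  Ordinal.le_iSup _ n

theorem exists_lt_of_lt_limHeight {δ : Ordinal.{0}} (h : δ < limHeight p) : ∃ n, δ < (p n).α :=
  Ordinal.lt_iSup_iff.1 h

theorem limHeight_lt_omega1 (p : ℕ → JechCond κ) : limHeight p < omega1 := by
  refine Ordinal.iSup_lt_of_lt_cof ?_ fun n => (p n).hα
  rw [omega1, Cardinal.isRegular_aleph_one.cof_ord, Cardinal.mk_nat]
  exact Cardinal.aleph0_lt_aleph_one

structure IsCofinalChain (p : ℕ → JechCond κ) (F : Set (Set (Ordinal.{0} × Ordinal.{0}))) :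
    Prop where
  isChain : IsChain (· ⊆ ·) F
  isTop : ∀ f ∈ F, ∃ n, (p n).IsTop f
  cofinal : ∀ n, ∃ m ≥ n, ∃ f ∈ F, (p m).IsTop f

namespace IsCofinalChain

variable {F : Set (Set (Ordinal.{0} × Ordinal.{0}))}

theorem isFuncOn (hp : Antitone p) (hF : IsCofinalChain p F) :
    IsFuncOn (⋃₀ F) (limHeight p) := by
  refine isFuncOn_sUnion hF.isChain (fun f hf => ?_) fun δ hδ => ?_
  · obtain ⟨n, hn⟩ := hF.isTop f hf
    exact ⟨_, le_limHeight p n, hn.2⟩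
  · obtain ⟨n, hn⟩ := exists_lt_of_lt_limHeight hδ
    obtain ⟨m, hm, f, hf, hfm⟩ := hF.cofinal n
    exact ⟨f, hf, _, hn.trans_le (α_le_of_le (hp hm)), hfm.2⟩

theorem eq_nodeRestrict (hp : Antitone p) (hF : IsCofinalChain p F) {n : ℕ}
    {f : Set (Ordinal.{0} × Ordinal.{0})} (hf : f ∈ F) (hfn : (p n).IsTop f) :
    f = nodeRestrict (⋃₀ F) (p n).α :=
  hfn.2.eq_nodeRestrict_of_subset (hF.isFuncOn hp) (Set.subset_sUnion_of_mem hf)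

theorem exists_nodeRestrict_mem (hp : Antitone p) (hF : IsCofinalChain p F) {γ : Ordinal.{0}}
    (hγ : γ < limHeight p) : ∃ n, nodeRestrict (⋃₀ F) γ ∈ (p n).t := by
  obtain ⟨n, hn⟩ := exists_lt_of_lt_limHeight hγ
  obtain ⟨m, hm, f, hf, hfm⟩ := hF.cofinal n
  refine ⟨m, ?_⟩
  rw [← hfm.2.nodeRestrict_eq_of_subset (hF.isFuncOn hp) (Set.subset_sUnion_of_mem hf)
    (hn.trans_le (α_le_of_le (hp hm))).le]
  exact (p m).ht_closed f hfm.1 γ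

theorem sUnion_mem_of_limHeight_le (hp : Antitone p) (hF : IsCofinalChain p F) {n : ℕ}
    (h : limHeight p ≤ (p n).α) : ⋃₀ F ∈ (p n).t := by
  obtain ⟨m, hm, f, hf, hfm⟩ := hF.cofinal n
  have hαm : (p m).α = limHeight p :=
    le_antisymm (le_limHeight p m) (h.trans (α_le_of_le (hp hm)))
  have hfF : f = ⋃₀ F := by
    rw [hF.eq_nodeRestrict hp hf hfm, hαm, (hF.isFuncOn hp).nodeRestrict_of_le le_rfl]
  rw [t_eq_of_le (hp hm), ← hfF]
  exact ⟨hfm.1, _, hαm ▸ h, hfm.2⟩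

end IsCofinalChain

def limDom (p : ℕ → JechCond κ) : Set Ordinal.{0} := ⋃ n, Prod.fst '' (p n).b

theorem limDom_countable (p : ℕ → JechCond κ) : (limDom p).Countable :=
  Set.countable_iUnion fun n => (p n).hb_count

def valueChain (p : ℕ → JechCond κ) (γ : Ordinal.{0}) : Set (Set (Ordinal.{0} × Ordinal.{0})) :=
  {f | ∃ n, (γ, f) ∈ (p n).b}

theorem isCofinalChain_valueChain (hp : Antitone p) {γ : Ordinal.{0}} (hγ : γ ∈ limDom p) :
    IsCofinalChain p (valueChain p γ) where
  isChain := by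
    rintro f ⟨m, hf⟩ g ⟨n, hg⟩ -
    rcases le_total m n with hmn | hnm
    · exact Or.inl ((eq_nodeRestrict_of_le (hp hmn) hf hg).trans_subset (nodeRestrict_subset _ _))
    · exact Or.inr ((eq_nodeRestrict_of_le (hp hnm) hg hf).trans_subset (nodeRestrict_subset _ _))
  isTop f := fun ⟨n, hf⟩ => ⟨n, (p n).hb_val _ hf⟩
  cofinal n := by
    obtain ⟨n₀, ⟨γ, f₀⟩, hf₀, rfl⟩ := by simpa only [limDom, Set.mem_iUnion, Set.mem_image] using hγ
    obtain ⟨f, hf⟩ := exists_mem_b_of_le (hp (le_max_left n₀ n)) hf₀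
    exact ⟨max n₀ n, le_max_right _ _, f, ⟨_, hf⟩, (p _).hb_val _ hf⟩

def nodeChain (p : ℕ → JechCond κ) (m : ℕ) (s : Set (Ordinal.{0} × Ordinal.{0})) :
    ℕ → Set (Ordinal.{0} × Ordinal.{0})
  | 0 => (p m).topExt s
  | k + 1 => (p (m + k + 1)).topExt (nodeChain p m s k)

theorem isTop_nodeChain (hp : Antitone p) {m : ℕ} (hs : s ∈ (p m).t) :
    ∀ k, (p (m + k)).IsTop (nodeChain p m s k)
  | 0 => (topExt_spec hs).1
  | k + 1 => (topExt_spec (t_subset_of_le (hp (Nat.le_succ _)) (isTop_nodeChain hp hs k).1)).1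

theorem monotone_nodeChain (hp : Antitone p) {m : ℕ} (hs : s ∈ (p m).t) :
    Monotone (nodeChain p m s) :=
  monotone_nat_of_le_succ fun k =>
    (topExt_spec (t_subset_of_le (hp (Nat.le_succ _)) (isTop_nodeChain hp hs k).1)).2

theorem isCofinalChain_nodeChain (hp : Antitone p) {m : ℕ} (hs : s ∈ (p m).t) :
    IsCofinalChain p (Set.range (nodeChain p m s)) where
  isChain := (monotone_nodeChain hp hs).isChain_range
  isTop := by
    rintro _ ⟨k, rfl⟩
    exact ⟨m + k, isTop_nodeChain hp hs k⟩
  cofinal n := ⟨m + n, Nat.le_add_left n m, _, ⟨n, rfl⟩, isTop_nodeChain hp hs n⟩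

def limTop (p : ℕ → JechCond κ) : Set (Set (Ordinal.{0} × Ordinal.{0})) :=
  (fun γ => ⋃₀ valueChain p γ) '' limDom p ∪
    ⋃ m, (fun s => ⋃₀ Set.range (nodeChain p m s)) '' (p m).t

theorem limTop_countable (p : ℕ → JechCond κ) : (limTop p).Countable :=
  ((limDom_countable p).image _).union (Set.countable_iUnion fun m => (p m).ht_count.image _)

theorem exists_isCofinalChain_of_mem_limTop (hp : Antitone p) (hs : s ∈ limTop p) :
    ∃ F, IsCofinalChain p F ∧ s = ⋃₀ F := by
  rcases hs with ⟨γ, hγ, rfl⟩ | hs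
  · exact ⟨_, isCofinalChain_valueChain hp hγ, rfl⟩
  · obtain ⟨m, s₀, hs₀, rfl⟩ := by simpa only [Set.mem_iUnion, Set.mem_image] using hs
    exact ⟨_, isCofinalChain_nodeChain hp hs₀, rfl⟩

theorem isFuncOn_of_mem_limTop (hp : Antitone p) (hs : s ∈ limTop p) :
    IsFuncOn s (limHeight p) := by
  obtain ⟨F, hF, rfl⟩ := exists_isCofinalChain_of_mem_limTop hp hs
  exact hF.isFuncOn hp

def lim (hp : Antitone p) : JechCond κ where
  α := limHeight p
  t := (⋃ n, (p n).t) ∪ limTop p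
  b := (fun γ => (γ, ⋃₀ valueChain p γ)) '' limDom p
  hα := limHeight_lt_omega1 p
  ht_count := (Set.countable_iUnion fun n => (p n).ht_count).union (limTop_countable p)
  ht_fun := by
    rintro s (hs | hs)
    · obtain ⟨n, hn⟩ := Set.mem_iUnion.1 hs
      obtain ⟨β, hβ, hsβ⟩ := (p n).ht_fun s hn
      exact ⟨β, hβ.trans (le_limHeight p n), hsβ⟩
    · exact ⟨_, le_rfl, isFuncOn_of_mem_limTop hp hs⟩
  ht_closed := by
    rintro s (hs | hs) γ
    · obtain ⟨n, hn⟩ := Set.mem_iUnion.1 hs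
      exact Or.inl (Set.mem_iUnion.2 ⟨n, (p n).ht_closed s hn γ⟩)
    · obtain ⟨F, hF, rfl⟩ := exists_isCofinalChain_of_mem_limTop hp hs
      rcases lt_or_ge γ (limHeight p) with hγ | hγ
      · obtain ⟨n, hn⟩ := hF.exists_nodeRestrict_mem hp hγ
        exact Or.inl (Set.mem_iUnion.2 ⟨n, hn⟩)
      · rw [(hF.isFuncOn hp).nodeRestrict_of_le hγ]
        exact Or.inr hs
  ht_levels β hβ := by
    obtain ⟨n, hn⟩ := exists_lt_of_lt_limHeight hβ
    obtain ⟨s, hs, hsβ⟩ := (p n).ht_levels β hn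
    exact ⟨s, Or.inl (Set.mem_iUnion.2 ⟨n, hs⟩), hsβ⟩
  ht_top_ext := by
    rintro s (hs | hs)
    · obtain ⟨m, hm⟩ := Set.mem_iUnion.1 hs
      exact ⟨_, Or.inr (Or.inr (Set.mem_iUnion.2 ⟨m, s, hm, rfl⟩)),
        (isCofinalChain_nodeChain hp hm).isFuncOn hp,
        (topExt_spec hm).2.trans (Set.subset_sUnion_of_mem ⟨0, rfl⟩)⟩
    · exact ⟨s, Or.inr hs, isFuncOn_of_mem_limTop hp hs, subset_rfl⟩
  hb_fun := by
    rintro _ ⟨γ, -, rfl⟩ _ ⟨γ', -, rfl⟩ (rfl : γ = γ')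
    rfl
  hb_count := by
    rw [← Set.image_comp]
    exact (limDom_countable p).image _
  hb_dom := by
    rintro _ ⟨γ, hγ, rfl⟩
    obtain ⟨n, x, hx, rfl⟩ := by simpa only [limDom, Set.mem_iUnion, Set.mem_image] using hγ
    exact (p n).hb_dom x hx
  hb_val := by
    rintro _ ⟨γ, hγ, rfl⟩
    exact ⟨Or.inr (Or.inl ⟨γ, hγ, rfl⟩), (isCofinalChain_valueChain hp hγ).isFuncOn hp⟩

theorem lim_le (hp : Antitone p) (n : ℕ) : lim hp ≤ p n := by
  refine ⟨le_limHeight p n, ?_, ?_⟩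
  · ext s
    refine ⟨fun hs => ⟨Or.inl (Set.mem_iUnion.2 ⟨n, hs⟩), (p n).ht_fun s hs⟩, ?_⟩
    rintro ⟨hs | hs, β, hβ, hsβ⟩
    · obtain ⟨m, hm⟩ := Set.mem_iUnion.1 hs
      rcases le_total m n with hmn | hnm
      · exact t_subset_of_le (hp hmn) hm
      · rw [t_eq_of_le (hp hnm)]
        exact ⟨hm, β, hβ, hsβ⟩
    · obtain ⟨F, hF, rfl⟩ := exists_isCofinalChain_of_mem_limTop hp hs
      exact hF.sUnion_mem_of_limHeight_le hp (hsβ.dom_unique (hF.isFuncOn hp) ▸ hβ)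
  · rintro ⟨γ, f⟩ hf
    have hγ : γ ∈ limDom p := Set.mem_iUnion.2 ⟨n, _, hf, rfl⟩
    exact ⟨_, ⟨γ, hγ, rfl⟩, rfl,
      (isCofinalChain_valueChain hp hγ).eq_nodeRestrict hp ⟨n, hf⟩ ((p n).hb_val _ hf)⟩

end Limit

end JechCond

theorem jech_sigma_closed_general (κ : Cardinal.{0})
    (p : ℕ → JechCond κ) (hdec : ∀ n : ℕ, JechLE (p (n + 1)) (p n)) :
    ∃ q : JechCond κ, ∀ n : ℕ, JechLE q (p n) :=
  have hp : Antitone p := antitone_nat_of_succ_le hdec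
  ⟨JechCond.lim hp, JechCond.lim_le hp⟩

/-- Jech's poset `K_κ` is `σ`-closed: every decreasing `ω`-sequence of conditions has a
lower bound. -/
theorem jech_sigma_closed (κ : Cardinal.{0}) (hreg : κ.IsRegular)
    (hκ : Cardinal.aleph 2 ≤ κ)
    (p : ℕ → JechCond κ) (hdec : ∀ n : ℕ, JechLE (p (n + 1)) (p n)) :
    ∃ q : JechCond κ, ∀ n : ℕ, JechLE q (p n) :=
  jech_sigma_closed_general κ p hdec
end
end

section
/- Let ω₁ ≤ δ < κ and let K_δ = {p ∈ K_κ : dom b_p ⊆ δ}. Then the map π : K_κ → K_δ defined by π(t, b) = (t, b ↾ δ) is a projection: (i) if p ≤ q in K_κ then π(p) ≤ π(q); and (ii) for every p ∈ K_κ and every q ∈ K_δ with q ≤ π(p), there exists p* ∈ K_κ with p* ≤ p and π(p*) ≤ q. -/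
noncomputable section

/-- The projection `π : K_κ → K_δ` sending `(t, b)` to `(t, b ↾ δ)`, where `b ↾ δ` is
the restriction of `b` to `{γ ∈ dom b : γ < δ}`. -/
def JechCond.restrictB {κ : Cardinal.{0}} (p : JechCond κ) (δ : Ordinal.{0}) :
    JechCond κ where
  α := p.α
  t := p.t
  b := {x ∈ p.b | x.1 < δ}
  hα := p.hα
  ht_count := p.ht_count
  ht_fun := p.ht_fun
  ht_closed := p.ht_closed
  ht_levels := p.ht_levels
  ht_top_ext := p.ht_top_ext
  hb_fun := fun x hx y hy h => p.hb_fun x hx.1 y hy.1 h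
  hb_count := p.hb_count.mono (by rintro y ⟨x, hx, e⟩; exact ⟨x, hx.1, e⟩)
  hb_dom := fun x hx => p.hb_dom x hx.1
  hb_val := fun x hx => p.hb_val x hx.1

/-- Membership in `K_δ = {p ∈ K_κ : dom b_p ⊆ δ}`. -/
def InKδ {κ : Cardinal.{0}} (δ : Ordinal.{0}) (p : JechCond κ) : Prop :=
  ∀ x ∈ p.b, x.1 < δ

/-- For `ω₁ ≤ δ < κ`, the map `π(t, b) = (t, b ↾ δ)` is a projection from `K_κ` onto
`K_δ`: it is order-preserving, and whenever `q ∈ K_δ` with `q ≤ π(p)` there is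
`p* ≤ p` in `K_κ` with `π(p*) ≤ q`. -/
theorem jech_restrict_is_projection (κ : Cardinal.{0}) (hreg : κ.IsRegular)
    (hκ : Cardinal.aleph 2 ≤ κ) (δ : Ordinal.{0})
    (hδ₁ : omega1 ≤ δ) (hδ₂ : δ < κ.ord) :
    (∀ p q : JechCond κ, JechLE p q → JechLE (p.restrictB δ) (q.restrictB δ)) ∧
    (∀ p q : JechCond κ, InKδ δ q → JechLE q (p.restrictB δ) →
      ∃ pstar : JechCond κ, JechLE pstar p ∧ JechLE (pstar.restrictB δ) q) := by
  constructor
  · rintro p q ⟨h1, h2, h3⟩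
    refine ⟨h1, ?_, ?_⟩
    · show q.t = {s ∈ p.t | ∃ β ≤ q.α, IsFuncOn s β}
      exact h2
    · rintro x ⟨hx, hxδ⟩
      obtain ⟨y, hy, hxy1, hxy2⟩ := h3 x hx
      exact ⟨y, ⟨hy, hxy1 ▸ hxδ⟩, hxy1, hxy2⟩
  · rintro p q hq ⟨h1, h2, h3⟩
    -- h1 : p.α ≤ q.α ; h2 : p.t = {s ∈ q.t | ∃ β ≤ p.α, IsFuncOn s β}
    have h2' : p.t = {s ∈ q.t | ∃ β ≤ p.α, IsFuncOn s β} := h2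
    have h1' : p.α ≤ q.α := h1
    have h3' : ∀ x ∈ {x ∈ p.b | x.1 < δ}, ∃ y ∈ q.b, x.1 = y.1 ∧ x.2 = nodeRestrict y.2 p.α := h3
    have hpt : p.t ⊆ q.t := by
      intro s hs; rw [h2'] at hs; exact hs.1
    have H : ∀ x : {x // x ∈ p.b}, ∃ s', s' ∈ q.t ∧ IsFuncOn s' q.α ∧ x.1.2 ⊆ s' := by
      intro x
      obtain ⟨s', hs', hfun, hsub⟩ := q.ht_top_ext x.1.2 (hpt (p.hb_val x.1 x.2).1)
      exact ⟨s', hs', hfun, hsub⟩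
    choose E hE1 hE2 hE3 using H
    set bnew : Set (Ordinal.{0} × Set (Ordinal.{0} × Ordinal.{0})) :=
      q.b ∪ {z | ∃ x : {x // x ∈ p.b}, δ ≤ x.1.1 ∧ z = (x.1.1, E x)} with hbnew
    have hbfun : ∀ x ∈ bnew, ∀ y ∈ bnew, x.1 = y.1 → x = y := by
      rintro x (hx | ⟨x₀, hx₀, rfl⟩) y (hy | ⟨y₀, hy₀, rfl⟩) hxy
      · exact q.hb_fun x hx y hy hxy
      · exact absurd (hxy ▸ hq x hx) (not_lt.mpr hy₀)
      · exact absurd (hxy ▸ hx₀) (not_le.mpr (hq y hy))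
      · have : x₀.1 = y₀.1 := p.hb_fun x₀.1 x₀.2 y₀.1 y₀.2 hxy
        have : x₀ = y₀ := Subtype.ext this
        rw [this]
    have hxtop : ∀ x ∈ q.b, x.2 = nodeRestrict x.2 q.α := by
      intro x hx
      ext z
      constructor
      · intro hz; exact ⟨hz, ((q.hb_val x hx).2.1 z hz).1⟩
      · exact fun hz => hz.1
    have hkey : ∀ x : {x // x ∈ p.b}, x.1.2 = nodeRestrict (E x) p.α := by
      intro x
      have hfx : IsFuncOn x.1.2 p.α := (p.hb_val x.1 x.2).2
      ext z
      constructor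
      · intro hz; exact ⟨hE3 x hz, (hfx.1 z hz).1⟩
      · rintro ⟨hz, hz1⟩
        obtain ⟨v, hv, _⟩ := hfx.2 z.1 hz1
        have hv' : (z.1, v) ∈ E x := hE3 x hv
        obtain ⟨w, hw, hwu⟩ := (hE2 x).2 z.1 (lt_of_lt_of_le hz1 h1')
        have : z.2 = v := by
          rw [hwu z.2 (by simpa using hz), hwu v hv']
        have : z = (z.1, v) := Prod.ext rfl this
        rw [this]; exact hv
    refine ⟨⟨q.α, q.t, bnew, q.hα, q.ht_count, q.ht_fun, q.ht_closed, q.ht_levels,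
      q.ht_top_ext, hbfun, ?_, ?_, ?_⟩, ?_, ?_⟩
    · refine Set.Countable.mono ?_ (q.hb_count.union p.hb_count)
      rintro a ⟨z, (hz | ⟨x₀, _, rfl⟩), rfl⟩
      · exact Or.inl ⟨z, hz, rfl⟩
      · exact Or.inr ⟨x₀.1, x₀.2, rfl⟩
    · rintro x (hx | ⟨x₀, _, rfl⟩)
      · exact q.hb_dom x hx
      · exact p.hb_dom x₀.1 x₀.2
    · rintro x (hx | ⟨x₀, _, rfl⟩)
      · exact q.hb_val x hx
      · exact ⟨hE1 x₀, hE2 x₀⟩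
    · -- pstar ≤ p
      refine ⟨h1', h2', ?_⟩
      intro x hx
      by_cases hxδ : x.1 < δ
      · obtain ⟨y, hy, hxy⟩ := h3 x ⟨hx, hxδ⟩
        exact ⟨y, Or.inl hy, hxy⟩
      · refine ⟨(x.1, E ⟨x, hx⟩), Or.inr ⟨⟨x, hx⟩, not_lt.mp hxδ, rfl⟩, rfl, ?_⟩
        exact hkey ⟨x, hx⟩
    · -- π(pstar) ≤ q
      refine ⟨le_rfl, ?_, ?_⟩
      · show q.t = {s ∈ q.t | ∃ β ≤ q.α, IsFuncOn s β}
        ext s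
        exact ⟨fun hs => ⟨hs, q.ht_fun s hs⟩, fun hs => hs.1⟩
      · intro x hx
        exact ⟨x, ⟨Or.inl hx, hq x hx⟩, rfl, hxtop x hx⟩

end
end
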